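/- arXiv:2601.13281 — 2 statements merged into one kernel-verified Lean document; each statement's English description precedes it below -/
import Mathlib

section
/- Let d ≥ 1, let W be a real d×d orthogonal matrix, fix an index i and fix positive values λ_k for k ≠ i. For f ∈ ℝ let Λ(f) have i-th diagonal entry e^f and k-th entry λ_k (k ≠ i), Σ(f) = W Λ(f) Wᵀ, Δ(f) = diag(Σ(f)), and R(f) = Δ(f)^{-1/2} Σ(f) Δ(f)^{-1/2}. Then the map f ↦ log det R(f) is differentiable with derivative ∂ log det R / ∂f_i = 1 − λ_i Σ_{j=1}^d W_{ji}² / Σ_{jj} = 1 − 2·trace(Σ̇_i), where λ_i = e^f and Σ̇_i = (1/2) λ_i diag(W_{1i}²/Σ_{11},…,W_{di}²/Σ_{dd}). -/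
open Matrix

/-- `Σ = W Λ Wᵀ` for a diagonal `Λ` with entries `lam`. -/
noncomputable def Sig {d : ℕ} (W : Matrix (Fin d) (Fin d) ℝ) (lam : Fin d → ℝ) :
    Matrix (Fin d) (Fin d) ℝ :=
  W * Matrix.diagonal lam * Wᵀ

/-- `R = Δ^{-1/2} Σ Δ^{-1/2}` with `Δ = diag(Σ)`. -/
noncomputable def Rmat {d : ℕ} (W : Matrix (Fin d) (Fin d) ℝ) (lam : Fin d → ℝ) :
    Matrix (Fin d) (Fin d) ℝ :=
  Matrix.diagonal (fun j => (Real.sqrt (Sig W lam j j))⁻¹) * Sig W lam *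
    Matrix.diagonal (fun j => (Real.sqrt (Sig W lam j j))⁻¹)

/-- `Σ̇_i = (1/2) λ_i diag(W_{1i}²/Σ_{11}, …, W_{di}²/Σ_{dd})`. -/
noncomputable def Sdot {d : ℕ} (W : Matrix (Fin d) (Fin d) ℝ) (lam : Fin d → ℝ) (i : Fin d) :
    Matrix (Fin d) (Fin d) ℝ :=
  Matrix.diagonal fun j => (1 / 2) * lam i * (W j i) ^ 2 / Sig W lam j j

lemma Sig_diag {d : ℕ} (W : Matrix (Fin d) (Fin d) ℝ) (lam : Fin d → ℝ) (j : Fin d) :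
    Sig W lam j j = ∑ k, lam k * (W j k) ^ 2 := by
  simp only [Sig, Matrix.mul_apply, Matrix.diagonal_apply, Matrix.transpose_apply,
    mul_ite, ite_mul, mul_zero, zero_mul, Finset.sum_ite_eq', Finset.mem_univ, if_true]
  exact Finset.sum_congr rfl fun k _ => by ring

lemma row_sq_sum {d : ℕ} (W : Matrix (Fin d) (Fin d) ℝ) (hW : Wᵀ * W = 1) (j : Fin d) :
    ∑ k, (W j k) ^ 2 = 1 := by
  have h2 : W * Wᵀ = 1 := mul_eq_one_comm.mp hW
  have := congrArg (fun M => M j j) h2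
  simpa [Matrix.mul_apply, Matrix.one_apply, sq] using this

lemma Sig_pos {d : ℕ} (W : Matrix (Fin d) (Fin d) ℝ) (hW : Wᵀ * W = 1)
    (lam : Fin d → ℝ) (hlam : ∀ k, 0 < lam k) (j : Fin d) :
    0 < Sig W lam j j := by
  rw [Sig_diag]
  obtain ⟨k, hk⟩ : ∃ k, (W j k) ^ 2 ≠ 0 := by
    by_contra h
    push_neg at h
    have := row_sq_sum W hW j
    simp [h] at this
  exact Finset.sum_pos' (fun k _ => mul_nonneg (hlam k).le (sq_nonneg _))
    ⟨k, Finset.mem_univ k, mul_pos (hlam k) (lt_of_le_of_ne (sq_nonneg _) (Ne.symm hk))⟩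

lemma det_Sig {d : ℕ} (W : Matrix (Fin d) (Fin d) ℝ) (hW : Wᵀ * W = 1) (lam : Fin d → ℝ) :
    (Sig W lam).det = ∏ k, lam k := by
  have hdet : W.det * W.det = 1 := by
    have := congrArg Matrix.det hW
    simpa [Matrix.det_mul, Matrix.det_transpose, mul_comm] using this
  simp only [Sig, Matrix.det_mul, Matrix.det_diagonal, Matrix.det_transpose]
  calc W.det * (∏ k, lam k) * W.det = (W.det * W.det) * ∏ k, lam k := by ring
    _ = ∏ k, lam k := by rw [hdet, one_mul]

lemma log_det_Rmat {d : ℕ} (W : Matrix (Fin d) (Fin d) ℝ) (hW : Wᵀ * W = 1)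
    (lam : Fin d → ℝ) (hlam : ∀ k, 0 < lam k) :
    Real.log (Rmat W lam).det
      = (∑ k, Real.log (lam k)) - ∑ j, Real.log (Sig W lam j j) := by
  have hS : ∀ j, 0 < Sig W lam j j := Sig_pos W hW lam hlam
  have hdet : (Rmat W lam).det = (∏ k, lam k) * ∏ j, (Sig W lam j j)⁻¹ := by
    simp only [Rmat, Matrix.det_mul, Matrix.det_diagonal, det_Sig W hW]
    have h1 : ∀ j : Fin d, (Real.sqrt (Sig W lam j j))⁻¹ * (Real.sqrt (Sig W lam j j))⁻¹
        = (Sig W lam j j)⁻¹ := fun j => by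
      rw [← mul_inv, Real.mul_self_sqrt (hS j).le]
    calc (∏ j, (Real.sqrt (Sig W lam j j))⁻¹) * (∏ k, lam k)
          * ∏ j, (Real.sqrt (Sig W lam j j))⁻¹
        = (∏ k, lam k) * ∏ j, ((Real.sqrt (Sig W lam j j))⁻¹
            * (Real.sqrt (Sig W lam j j))⁻¹) := by
          rw [Finset.prod_mul_distrib]; ring
      _ = (∏ k, lam k) * ∏ j, (Sig W lam j j)⁻¹ := by
          rw [Finset.prod_congr rfl fun j _ => h1 j]
  rw [hdet, Real.log_mul (Finset.prod_ne_zero_iff.mpr fun k _ => (hlam k).ne')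
      (Finset.prod_ne_zero_iff.mpr fun j _ => inv_ne_zero (hS j).ne'),
    Real.log_prod fun k _ => (hlam k).ne',
    Real.log_prod fun j _ => inv_ne_zero (hS j).ne']
  simp [Real.log_inv, sub_eq_add_neg]

/-- with the `i`-th eigenvalue parameterized as `λ_i = e^f` (others fixed),
`f ↦ log det R(f)` is differentiable with derivative
`1 − λ_i ∑_j W_{ji}²/Σ_{jj} = 1 − 2 trace(Σ̇_i)`. -/
theorem deriv_logdet_R {d : ℕ} (hd : 1 ≤ d)
    (W : Matrix (Fin d) (Fin d) ℝ) (hW : Wᵀ * W = 1)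
    (i : Fin d) (lam : Fin d → ℝ) (hlam : ∀ k, k ≠ i → 0 < lam k)
    (f : ℝ) :
    HasDerivAt (fun g : ℝ => Real.log (Rmat W (Function.update lam i (Real.exp g))).det)
      (1 - Real.exp f *
        ∑ j, (W j i) ^ 2 / Sig W (Function.update lam i (Real.exp f)) j j) f ∧
    1 - Real.exp f * ∑ j, (W j i) ^ 2 / Sig W (Function.update lam i (Real.exp f)) j j =
      1 - 2 * (Sdot W (Function.update lam i (Real.exp f)) i).trace := by
  set a : Fin d → ℝ := fun j => (W j i) ^ 2 with ha
  set c : Fin d → ℝ := fun j => ∑ k ∈ Finset.univ.erase i, lam k * (W j k) ^ 2 with hc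
  have hpos : ∀ g : ℝ, ∀ k, 0 < Function.update lam i (Real.exp g) k := by
    intro g k
    by_cases hk : k = i
    · subst hk; simp [Real.exp_pos]
    · rw [Function.update_of_ne hk]; exact hlam k hk
  have hSig : ∀ g : ℝ, ∀ j, Sig W (Function.update lam i (Real.exp g)) j j
      = Real.exp g * a j + c j := by
    intro g j
    rw [Sig_diag, ← Finset.add_sum_erase _ _ (Finset.mem_univ i)]
    congr 1
    · simp [ha]
    · exact Finset.sum_congr rfl fun k hk => by
        rw [Function.update_of_ne (Finset.ne_of_mem_erase hk)]
  have hSpos : ∀ g : ℝ, ∀ j, 0 < Real.exp g * a j + c j := by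
    intro g j
    rw [← hSig]
    exact Sig_pos W hW _ (hpos g) j
  -- sum of logs of updated lam
  have hlogsum : ∀ g : ℝ, (∑ k, Real.log (Function.update lam i (Real.exp g) k))
      = g + ∑ k ∈ Finset.univ.erase i, Real.log (lam k) := by
    intro g
    rw [← Finset.add_sum_erase _ _ (Finset.mem_univ i)]
    congr 1
    · simp
    · exact Finset.sum_congr rfl fun k hk => by
        rw [Function.update_of_ne (Finset.ne_of_mem_erase hk)]
  have hfun : (fun g : ℝ => Real.log (Rmat W (Function.update lam i (Real.exp g))).det)
      = fun g : ℝ => (g + ∑ k ∈ Finset.univ.erase i, Real.log (lam k))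
          - ∑ j, Real.log (Real.exp g * a j + c j) := by
    funext g
    rw [log_det_Rmat W hW _ (hpos g), hlogsum g]
    congr 1
    exact Finset.sum_congr rfl fun j _ => by rw [hSig g j]
  have hD : HasDerivAt
      (fun g : ℝ => (g + ∑ k ∈ Finset.univ.erase i, Real.log (lam k))
          - ∑ j, Real.log (Real.exp g * a j + c j))
      (1 - ∑ j, Real.exp f * a j / (Real.exp f * a j + c j)) f := by
    have h1 : HasDerivAt (fun g : ℝ => g + ∑ k ∈ Finset.univ.erase i, Real.log (lam k))
        1 f := (hasDerivAt_id f).add_const _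
    have h2 : HasDerivAt (fun g : ℝ => ∑ j, Real.log (Real.exp g * a j + c j))
        (∑ j, Real.exp f * a j / (Real.exp f * a j + c j)) f := by
      apply HasDerivAt.fun_sum
      intro j _
      exact (((Real.hasDerivAt_exp f).mul_const (a j)).add_const (c j)).log (hSpos f j).ne'
    exact h1.sub h2
  have hderiv_eq : (1 : ℝ) - ∑ j, Real.exp f * a j / (Real.exp f * a j + c j)
      = 1 - Real.exp f *
        ∑ j, (W j i) ^ 2 / Sig W (Function.update lam i (Real.exp f)) j j := by
    congr 1
    rw [Finset.mul_sum]
    exact Finset.sum_congr rfl fun j _ => by rw [hSig f j, mul_div_assoc]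
  constructor
  · rw [hfun, ← hderiv_eq]; exact hD
  · rw [Sdot, Matrix.trace_diagonal]
    congr 1
    rw [Finset.mul_sum, Finset.mul_sum]
    refine Finset.sum_congr rfl fun j _ => ?_
    rw [Function.update_self]
    ring
end

section
/- Let d ≥ 1, let W be a real d×d orthogonal matrix with columns w_1,…,w_d, fix an index i and fix positive values λ_k for k ≠ i. For f ∈ ℝ let Λ(f) have i-th diagonal entry e^f and k-th entry λ_k (k ≠ i), Σ(f) = W Λ(f) Wᵀ, Δ(f) = diag(Σ(f)), and R(f) = Δ(f)^{-1/2} Σ(f) Δ(f)^{-1/2}. Then f ↦ R(f)^{-1} is differentiable with derivative ∂R^{-1}/∂f_i = −Δ^{1/2} (w_i w_iᵀ / λ_i) Δ^{1/2} + Σ̇_i R^{-1} + R^{-1} Σ̇_i, where λ_i = e^f and Σ̇_i = (1/2) λ_i diag(W_{1i}²/Σ_{11},…,W_{di}²/Σ_{dd}). -/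
open Matrix

/-- `Δ^{1/2}`: the diagonal matrix with entries `√(Σ_{jj})`. -/
noncomputable def Dhalf {d : ℕ} (W : Matrix (Fin d) (Fin d) ℝ) (lam : Fin d → ℝ) :
    Matrix (Fin d) (Fin d) ℝ :=
  Matrix.diagonal fun j => Real.sqrt (Sig W lam j j)

/-- The closed-form expression `D_i = −Δ^{1/2} (w_i w_iᵀ/λ_i) Δ^{1/2} + Σ̇_i R⁻¹ + R⁻¹ Σ̇_i`
for the derivative `∂R⁻¹/∂ log λ_i`. -/
noncomputable def Dform {d : ℕ} (W : Matrix (Fin d) (Fin d) ℝ) (lam : Fin d → ℝ) (i : Fin d) :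
    Matrix (Fin d) (Fin d) ℝ :=
  -(Dhalf W lam * ((lam i)⁻¹ • Matrix.vecMulVec (fun j => W j i) (fun j => W j i)) *
      Dhalf W lam) +
    Sdot W lam i * (Rmat W lam)⁻¹ + (Rmat W lam)⁻¹ * Sdot W lam i

lemma cancel_aux {d : ℕ} (A B X : Matrix (Fin d) (Fin d) ℝ) (h : A * B = 1) :
    A * (B * X) = X := by rw [← Matrix.mul_assoc, h, one_mul]

lemma right_inv_aux {d : ℕ} (W : Matrix (Fin d) (Fin d) ℝ) (lam : Fin d → ℝ)
    (hW : Wᵀ * W = 1) (hpos : ∀ m, 0 < lam m) (t : Fin d → ℝ) (ht : ∀ j, 0 < t j) :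
    (Matrix.diagonal (fun j => (Real.sqrt (t j))⁻¹) * Sig W lam *
      Matrix.diagonal (fun j => (Real.sqrt (t j))⁻¹)) *
    (Matrix.diagonal (fun j => Real.sqrt (t j)) *
      (W * Matrix.diagonal (fun m => (lam m)⁻¹) * Wᵀ) *
      Matrix.diagonal (fun j => Real.sqrt (t j))) = 1 := by
  have hW' : W * Wᵀ = 1 := mul_eq_one_comm.mp hW
  have hd : Matrix.diagonal lam * Matrix.diagonal (fun m => (lam m)⁻¹) = 1 := by
    rw [Matrix.diagonal_mul_diagonal]
    ext a b
    by_cases h : a = b <;>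
      simp [h, Matrix.diagonal_apply, Matrix.one_apply, mul_inv_cancel₀ (hpos b).ne']
  have hss : Matrix.diagonal (fun j => (Real.sqrt (t j))⁻¹) *
      Matrix.diagonal (fun j => Real.sqrt (t j)) = 1 := by
    rw [Matrix.diagonal_mul_diagonal]
    ext a b
    by_cases h : a = b <;>
      simp [h, Matrix.diagonal_apply, Matrix.one_apply,
        inv_mul_cancel₀ (Real.sqrt_ne_zero'.mpr (ht b))]
  simp only [Sig, Matrix.mul_assoc]
  rw [cancel_aux _ _ _ hss, cancel_aux _ _ _ hW, cancel_aux _ _ _ hd, cancel_aux _ _ _ hW', hss]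

lemma Rmat_inv {d : ℕ} (W : Matrix (Fin d) (Fin d) ℝ) (lam : Fin d → ℝ)
    (hW : Wᵀ * W = 1) (hpos : ∀ m, 0 < lam m) (hS : ∀ j, 0 < Sig W lam j j) :
    (Rmat W lam)⁻¹ =
      Dhalf W lam * (W * Matrix.diagonal (fun m => (lam m)⁻¹) * Wᵀ) * Dhalf W lam :=
  Matrix.inv_eq_right_inv (right_inv_aux W lam hW hpos _ hS)

lemma Sig_apply' {d : ℕ} (W : Matrix (Fin d) (Fin d) ℝ) (lam : Fin d → ℝ) (j k : Fin d) :
    Sig W lam j k = ∑ m, W j m * lam m * W k m := by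
  simp [Sig, Matrix.mul_apply, Matrix.mul_diagonal, Matrix.diagonal_apply,
    Finset.mul_sum, Finset.sum_mul]

lemma Rinv_apply {d : ℕ} (W : Matrix (Fin d) (Fin d) ℝ) (lam : Fin d → ℝ)
    (hW : Wᵀ * W = 1) (hpos : ∀ m, 0 < lam m) (hS : ∀ j, 0 < Sig W lam j j) (j k : Fin d) :
    ((Rmat W lam)⁻¹) j k = Real.sqrt (Sig W lam j j) *
      (∑ m, W j m * (lam m)⁻¹ * W k m) * Real.sqrt (Sig W lam k k) := by
  rw [Rmat_inv W lam hW hpos hS]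
  have hM : (W * Matrix.diagonal (fun m => (lam m)⁻¹) * Wᵀ) j k
      = ∑ m, W j m * (lam m)⁻¹ * W k m := Sig_apply' W _ j k
  simp [Dhalf, Matrix.mul_diagonal, Matrix.diagonal_mul, hM]

lemma Dform_apply {d : ℕ} (W : Matrix (Fin d) (Fin d) ℝ) (lam : Fin d → ℝ) (i j k : Fin d) :
    Dform W lam i j k =
      -(Real.sqrt (Sig W lam j j) * ((lam i)⁻¹ * (W j i * W k i)) * Real.sqrt (Sig W lam k k))
      + ((1 / 2) * lam i * (W j i) ^ 2 / Sig W lam j j) * ((Rmat W lam)⁻¹ j k)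
      + ((Rmat W lam)⁻¹ j k) * ((1 / 2) * lam i * (W k i) ^ 2 / Sig W lam k k) := by
  simp [Dform, Sdot, Dhalf, Matrix.add_apply, Matrix.neg_apply, Matrix.mul_diagonal,
    Matrix.diagonal_mul, Matrix.vecMulVec_apply, Matrix.smul_apply, smul_eq_mul]
  ring
lemma Sig_diag_pos {d : ℕ} (W : Matrix (Fin d) (Fin d) ℝ) (lam : Fin d → ℝ)
    (hW' : W * Wᵀ = 1) (hpos : ∀ m, 0 < lam m) (j : Fin d) :
    0 < Sig W lam j j := by
  have h1 : (∑ m, W j m * W j m) = 1 := by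
    have := congrArg (fun M => M j j) hW'
    simpa [Matrix.mul_apply, Matrix.one_apply] using this
  have hne : ∃ m : Fin d, W j m ≠ 0 := by
    by_contra h
    push_neg at h
    simp [h] at h1
  obtain ⟨m, hm⟩ := hne
  rw [Sig_apply']
  refine Finset.sum_pos' (fun n _ => ?_) ⟨m, Finset.mem_univ m, ?_⟩
  · have h : W j n * lam n * W j n = lam n * (W j n)^2 := by ring
    have hn := (hpos n).le
    rw [h]; positivity
  · have h : W j m * lam m * W j m = lam m * (W j m)^2 := by ring
    have hn := hpos m
    rw [h]; positivity
lemma hasDerivAt_SigEntry {d : ℕ} (W : Matrix (Fin d) (Fin d) ℝ) (lam : Fin d → ℝ)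
    (i j : Fin d) (f : ℝ) :
    HasDerivAt (fun g : ℝ => Sig W (Function.update lam i (Real.exp g)) j j)
      (Real.exp f * (W j i) ^ 2) f := by
  have h1 : (fun g : ℝ => Sig W (Function.update lam i (Real.exp g)) j j)
      = fun g : ℝ => ∑ m, W j m * Function.update lam i (Real.exp g) m * W j m :=
    funext fun g => Sig_apply' W _ j j
  rw [h1]
  have h2 : HasDerivAt
      (fun g : ℝ => ∑ m, W j m * Function.update lam i (Real.exp g) m * W j m)
      (∑ m, if m = i then W j i * Real.exp f * W j i else 0) f := by
    apply HasDerivAt.fun_sum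
    intro m _
    by_cases hm : m = i
    · subst hm
      simp only [Function.update_self, if_pos rfl]
      exact ((Real.hasDerivAt_exp f).const_mul (W j m)).mul_const (W j m)
    · simp only [Function.update_of_ne hm, if_neg hm]
      exact hasDerivAt_const f _
  convert h2 using 1
  simp [Finset.sum_ite_eq']
  ring

lemma hasDerivAt_Tsum {d : ℕ} (W : Matrix (Fin d) (Fin d) ℝ) (lam : Fin d → ℝ)
    (i j k : Fin d) (f : ℝ) :
    HasDerivAt (fun g : ℝ => ∑ m, W j m * (Function.update lam i (Real.exp g) m)⁻¹ * W k m)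
      (-(W j i * (Real.exp f)⁻¹ * W k i)) f := by
  have h2 : HasDerivAt
      (fun g : ℝ => ∑ m, W j m * (Function.update lam i (Real.exp g) m)⁻¹ * W k m)
      (∑ m, if m = i then W j i * (-(Real.exp f) / (Real.exp f) ^ 2) * W k i else 0) f := by
    apply HasDerivAt.fun_sum
    intro m _
    by_cases hm : m = i
    · subst hm
      simp only [Function.update_self, if_pos rfl]
      exact (((Real.hasDerivAt_exp f).inv (Real.exp_ne_zero f)).const_mul (W j m)).mul_const
        (W k m)
    · simp only [Function.update_of_ne hm, if_neg hm]
      exact hasDerivAt_const f _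
  convert h2 using 1
  rw [Finset.sum_ite_eq' Finset.univ i fun _ => W j i * (-(Real.exp f) / (Real.exp f) ^ 2) * W k i]
  simp
  field_simp

/-- with the `i`-th eigenvalue parameterized as `λ_i = e^f` (others fixed),
`f ↦ R(f)⁻¹` is differentiable (entrywise) with derivative
`∂R⁻¹/∂f_i = −Δ^{1/2} (w_i w_iᵀ/λ_i) Δ^{1/2} + Σ̇_i R⁻¹ + R⁻¹ Σ̇_i`. -/
theorem deriv_Rinv {d : ℕ} (hd : 1 ≤ d)
    (W : Matrix (Fin d) (Fin d) ℝ) (hW : Wᵀ * W = 1)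
    (i : Fin d) (lam : Fin d → ℝ) (hlam : ∀ k, k ≠ i → 0 < lam k)
    (f : ℝ) (j k : Fin d) :
    HasDerivAt (fun g : ℝ => ((Rmat W (Function.update lam i (Real.exp g)))⁻¹) j k)
      (Dform W (Function.update lam i (Real.exp f)) i j k) f := by
  have hW' : W * Wᵀ = 1 := mul_eq_one_comm.mp hW
  have hLpos : ∀ (g : ℝ) m, 0 < Function.update lam i (Real.exp g) m := by
    intro g m
    by_cases h : m = i
    · subst h; simp [Real.exp_pos]
    · rw [Function.update_of_ne h]; exact hlam m h
  have hSpos : ∀ (g : ℝ) (n : Fin d), 0 < Sig W (Function.update lam i (Real.exp g)) n n :=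
    fun g n => Sig_diag_pos W _ hW' (hLpos g) n
  -- rewrite the function entrywise
  have hfun : (fun g : ℝ => ((Rmat W (Function.update lam i (Real.exp g)))⁻¹) j k)
      = fun g : ℝ =>
        Real.sqrt (Sig W (Function.update lam i (Real.exp g)) j j) *
          (∑ m, W j m * (Function.update lam i (Real.exp g) m)⁻¹ * W k m) *
          Real.sqrt (Sig W (Function.update lam i (Real.exp g)) k k) :=
    funext fun g => Rinv_apply W _ hW (hLpos g) (hSpos g) j k
  rw [hfun]
  -- derivatives of the pieces
  have hAj := hasDerivAt_SigEntry W lam i j f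
  have hAk := hasDerivAt_SigEntry W lam i k f
  have hT := hasDerivAt_Tsum W lam i j k f
  have hsqj : HasDerivAt
      (fun g : ℝ => Real.sqrt (Sig W (Function.update lam i (Real.exp g)) j j))
      (1 / (2 * Real.sqrt (Sig W (Function.update lam i (Real.exp f)) j j)) *
        (Real.exp f * (W j i) ^ 2)) f :=
    (Real.hasDerivAt_sqrt (hSpos f j).ne').comp f hAj
  have hsqk : HasDerivAt
      (fun g : ℝ => Real.sqrt (Sig W (Function.update lam i (Real.exp g)) k k))
      (1 / (2 * Real.sqrt (Sig W (Function.update lam i (Real.exp f)) k k)) *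
        (Real.exp f * (W k i) ^ 2)) f :=
    (Real.hasDerivAt_sqrt (hSpos f k).ne').comp f hAk
  have hP := (hsqj.mul hT).mul hsqk
  refine hP.congr_deriv (Eq.symm ?_)
  simp only [Pi.mul_apply]
  -- now the algebraic identity for the derivative value
  rw [Dform_apply, Rinv_apply W _ hW (hLpos f) (hSpos f) j k]
  set A := Sig W (Function.update lam i (Real.exp f)) j j with hA
  set B := Sig W (Function.update lam i (Real.exp f)) k k with hB
  set T := ∑ m, W j m * (Function.update lam i (Real.exp f) m)⁻¹ * W k m with hTt
  have hApos := hSpos f j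
  have hBpos := hSpos f k
  set u := Real.sqrt A with hu
  set v := Real.sqrt B with hv
  have hu0 : u ≠ 0 := Real.sqrt_ne_zero'.mpr hApos
  have hv0 : v ≠ 0 := Real.sqrt_ne_zero'.mpr hBpos
  have hAu : A = u * u := (Real.mul_self_sqrt hApos.le).symm
  have hBv : B = v * v := (Real.mul_self_sqrt hBpos.le).symm
  rw [Function.update_self, hAu, hBv]
  have he : Real.exp f ≠ 0 := Real.exp_ne_zero f
  field_simp
  ring
end
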